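/- The solution to the one-dimensional Skorokhod problem on [0,∞) is unique: if (ξ₁, φ₁) and (ξ₂, φ₂) both satisfy ξᵢ = w + φᵢ with ξᵢ ≥ 0, φᵢ nondecreasing continuous with φᵢ(0) = 0, and φᵢ increasing only when ξᵢ = 0, then ξ₁ = ξ₂ and φ₁ = φ₂. -/
import Mathlib


open Set

lemma skorokhod_aux
    (w ξ₁ φ₁ ξ₂ φ₂ : ℝ → ℝ)
    (hφ₁c : Continuous φ₁) (hφ₂c : Continuous φ₂)
    (hdec₁ : ∀ t, 0 ≤ t → ξ₁ t = w t + φ₁ t)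
    (hdec₂ : ∀ t, 0 ≤ t → ξ₂ t = w t + φ₂ t)
    (hpos₂ : ∀ t, 0 ≤ t → 0 ≤ ξ₂ t)
    (hmono₂ : MonotoneOn φ₂ (Ici 0))
    (hzero₁ : φ₁ 0 = 0) (hzero₂ : φ₂ 0 = 0)
    (hflat₁ : ∀ a b, 0 ≤ a → a ≤ b → (∀ u ∈ Icc a b, 0 < ξ₁ u) → φ₁ a = φ₁ b)
    (t : ℝ) (ht : 0 ≤ t) : φ₁ t ≤ φ₂ t := by
  by_contra hlt
  push_neg at hlt
  set S : Set ℝ := Icc 0 t ∩ {u | φ₁ u ≤ φ₂ u} with hS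
  have hS0 : (0 : ℝ) ∈ S := ⟨⟨le_refl 0, ht⟩, by simp [hzero₁, hzero₂]⟩
  have hSne : S.Nonempty := ⟨0, hS0⟩
  have hSbdd : BddAbove S := ⟨t, fun u hu => hu.1.2⟩
  set s := sSup S with hs
  have hSclosed : IsClosed S := isClosed_Icc.inter (isClosed_le hφ₁c hφ₂c)
  have hsS : s ∈ S := hSclosed.csSup_mem hSne hSbdd
  have hs0 : 0 ≤ s := hsS.1.1
  have hst : s ≤ t := hsS.1.2
  have hsφ : φ₁ s ≤ φ₂ s := hsS.2
  have hslt : s < t := by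
    rcases lt_or_eq_of_le hst with h | h
    · exact h
    · exact absurd (h ▸ hsφ) (not_le.mpr hlt)
  -- On (s, t], φ₂ u < φ₁ u, hence ξ₁ u > 0.
  have hkey : ∀ u, s < u → u ≤ t → 0 < ξ₁ u := by
    intro u hsu hut
    have hu0 : 0 ≤ u := le_of_lt (lt_of_le_of_lt hs0 hsu)
    have hφlt : φ₂ u < φ₁ u := by
      by_contra h
      push_neg at h
      have : u ∈ S := ⟨⟨hu0, hut⟩, h⟩
      exact absurd (le_csSup hSbdd this) (not_le.mpr hsu)
    have := hpos₂ u hu0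
    rw [hdec₂ u hu0] at this
    have : 0 < w u + φ₁ u := by linarith
    rw [hdec₁ u hu0]; exact this
  -- For each s' ∈ (s, t], φ₁ s' = φ₁ t.
  have hconst : ∀ s' ∈ Ioc s t, φ₁ s' = φ₁ t := by
    intro s' hs'
    exact hflat₁ s' t (le_of_lt (lt_of_le_of_lt hs0 hs'.1)) hs'.2
      (fun u hu => hkey u (lt_of_lt_of_le hs'.1 hu.1) hu.2)
  -- Continuity at s from the right gives φ₁ s = φ₁ t.
  have htend : Filter.Tendsto φ₁ (nhdsWithin s (Ioi s)) (nhds (φ₁ s)) :=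
    (hφ₁c.tendsto s).mono_left nhdsWithin_le_nhds
  have htend' : Filter.Tendsto φ₁ (nhdsWithin s (Ioi s)) (nhds (φ₁ t)) := by
    have hmem : Ioc s t ∈ nhdsWithin s (Ioi s) := Ioc_mem_nhdsGT_of_mem ⟨le_refl s, hslt⟩
    exact Filter.Tendsto.congr' (Filter.eventuallyEq_of_mem hmem
      (fun u hu => (hconst u hu).symm)) tendsto_const_nhds
  have hφeq : φ₁ s = φ₁ t := tendsto_nhds_unique htend htend'
  have : φ₂ s ≤ φ₂ t := hmono₂ hs0 ht hst
  linarith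
/-- Uniqueness for the one-dimensional Skorokhod problem on `[0, ∞)`: if `(ξ₁, φ₁)` and
`(ξ₂, φ₂)` are two solutions (continuous, `ξᵢ = w + φᵢ`, `ξᵢ ≥ 0`, `φᵢ` nondecreasing with
`φᵢ 0 = 0`, and `φᵢ` increasing only when `ξᵢ = 0`, i.e. constant on intervals where
`ξᵢ > 0`), then `ξ₁ = ξ₂` and `φ₁ = φ₂` on `[0, ∞)`. -/
theorem skorokhod_uniqueness
    (w ξ₁ φ₁ ξ₂ φ₂ : ℝ → ℝ) (hw : Continuous w) (hw0 : 0 ≤ w 0)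
    (hξ₁c : Continuous ξ₁) (hφ₁c : Continuous φ₁)
    (hξ₂c : Continuous ξ₂) (hφ₂c : Continuous φ₂)
    (hdec₁ : ∀ t, 0 ≤ t → ξ₁ t = w t + φ₁ t)
    (hdec₂ : ∀ t, 0 ≤ t → ξ₂ t = w t + φ₂ t)
    (hpos₁ : ∀ t, 0 ≤ t → 0 ≤ ξ₁ t)
    (hpos₂ : ∀ t, 0 ≤ t → 0 ≤ ξ₂ t)
    (hmono₁ : MonotoneOn φ₁ (Ici 0)) (hmono₂ : MonotoneOn φ₂ (Ici 0))
    (hzero₁ : φ₁ 0 = 0) (hzero₂ : φ₂ 0 = 0)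
    (hflat₁ : ∀ a b, 0 ≤ a → a ≤ b → (∀ u ∈ Icc a b, 0 < ξ₁ u) → φ₁ a = φ₁ b)
    (hflat₂ : ∀ a b, 0 ≤ a → a ≤ b → (∀ u ∈ Icc a b, 0 < ξ₂ u) → φ₂ a = φ₂ b) :
    ∀ t, 0 ≤ t → ξ₁ t = ξ₂ t ∧ φ₁ t = φ₂ t := by
  intro t ht
  have h12 := skorokhod_aux w ξ₁ φ₁ ξ₂ φ₂ hφ₁c hφ₂c hdec₁ hdec₂ hpos₂ hmono₂ hzero₁ hzero₂ hflat₁ t ht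
  have h21 := skorokhod_aux w ξ₂ φ₂ ξ₁ φ₁ hφ₂c hφ₁c hdec₂ hdec₁ hpos₁ hmono₁ hzero₂ hzero₁ hflat₂ t ht
  have hφ : φ₁ t = φ₂ t := le_antisymm h12 h21
  exact ⟨by rw [hdec₁ t ht, hdec₂ t ht, hφ], hφ⟩
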